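/- arXiv:2310.20376 — 4 statements merged into one kernel-verified Lean document; each statement's English description precedes it below -/
import Mathlib

section
/- For every Λ > 0, the double integral ∫_0^1 ∫_0^1 (1 + Λ x₁ x₂) e^(-Λ(1 - x₁x₂)) dx₁ dx₂ equals (1 - e^(-Λ))/Λ. -/
/-! The integrand is the `x₂`-derivative of `x₂ e^(-Λ(1 - x₁x₂))`, so the inner integral collapses
to `e^(-Λ(1 - x₁))`, whose integral over `[0, 1]` is `(1 - e^(-Λ))/Λ`. -/

open Real intervalIntegral

theorem hasDerivAt_mul_exp_affine (a b t : ℝ) :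
    HasDerivAt (fun s => s * exp (a + b * s)) ((1 + b * t) * exp (a + b * t)) t := by
  have hexp : HasDerivAt (fun s => exp (a + b * s)) (exp (a + b * t) * b) t :=
    (((hasDerivAt_id t).const_mul b).const_add a).exp.congr_deriv (by simp)
  exact ((hasDerivAt_id t).mul hexp).congr_deriv (by simp only [id]; ring)

theorem integral_one_add_mul_mul_exp_affine (a b y : ℝ) :
    ∫ t in (0:ℝ)..y, (1 + b * t) * exp (a + b * t) = y * exp (a + b * y) := by
  rw [integral_eq_sub_of_hasDerivAt (fun t _ => hasDerivAt_mul_exp_affine a b t)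
    (by apply Continuous.intervalIntegrable; fun_prop)]
  simp

theorem integral_exp_mul_sub_one {Λ : ℝ} (hΛ : Λ ≠ 0) :
    ∫ x in (0:ℝ)..1, exp (-Λ * (1 - x)) = (1 - exp (-Λ)) / Λ := by
  have hlin : ∀ x : ℝ, -Λ * (1 - x) = Λ * x - Λ := fun x => by ring
  simp only [hlin]
  rw [integral_comp_mul_sub exp hΛ, integral_exp]
  simp [div_eq_inv_mul]

/-- For every `Λ > 0`,
`∫_0^1 ∫_0^1 (1 + Λ x₁ x₂) e^(-Λ(1 - x₁x₂)) dx₂ dx₁ = (1 - e^(-Λ))/Λ`. -/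
theorem stmt_7 (Λ : ℝ) (hΛ : 0 < Λ) :
    (∫ x₁ in (0:ℝ)..1, ∫ x₂ in (0:ℝ)..1,
        (1 + Λ * x₁ * x₂) * Real.exp (-Λ * (1 - x₁ * x₂)))
      = (1 - Real.exp (-Λ)) / Λ := by
  have inner : ∀ x₁ : ℝ, (∫ x₂ in (0:ℝ)..1,
      (1 + Λ * x₁ * x₂) * Real.exp (-Λ * (1 - x₁ * x₂))) = exp (-Λ * (1 - x₁)) := by
    intro x₁
    have key := integral_one_add_mul_mul_exp_affine (-Λ) (Λ * x₁) 1
    convert key using 3 <;> ring_nf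
  simp only [inner]
  exact integral_exp_mul_sub_one hΛ.ne'
end

section
/- For every Λ > 0, one has -e^(-Λ) ∫_0^1 (1 + Λx) e^(Λx) log(x) dx = (1 - e^(-Λ))/Λ. -/
open Real intervalIntegral

/-! `x e^{Λx} log x - e^{Λx}/Λ` is an antiderivative of the integrand on `(0, ∞)`, and it is
continuous on `[0, 1]` because `x log x → 0` as `x → 0⁺`; the fundamental theorem of calculus
then evaluates the integral as `(1 - e^Λ)/Λ`. -/

namespace ExpLogIntegral

noncomputable def antideriv (Λ x : ℝ) : ℝ :=
  x * log x * exp (Λ * x) - exp (Λ * x) / Λ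

variable {Λ : ℝ}

theorem continuous_antideriv : Continuous (antideriv Λ) := by
  unfold antideriv
  exact (continuous_mul_log.mul (by fun_prop)).sub (by fun_prop)

theorem hasDerivAt_antideriv (hΛ : Λ ≠ 0) {x : ℝ} (hx : x ≠ 0) :
    HasDerivAt (antideriv Λ) ((1 + Λ * x) * exp (Λ * x) * log x) x := by
  have hexp : HasDerivAt (fun y => exp (Λ * y)) (exp (Λ * x) * Λ) x :=
    ((hasDerivAt_id x).const_mul Λ).exp.congr_deriv (by simp)
  have hmulLog : HasDerivAt (fun y => y * log y) (log x + 1) x :=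
    ((hasDerivAt_id' x).mul (hasDerivAt_log hx)).congr_deriv (by field_simp)
  refine ((hmulLog.mul hexp).sub (hexp.div_const Λ)).congr_deriv ?_
  field_simp
  ring

theorem antideriv_zero : antideriv Λ 0 = -1 / Λ := by
  simp [antideriv, neg_div]

theorem antideriv_one : antideriv Λ 1 = -exp Λ / Λ := by
  simp [antideriv, neg_div]

theorem integral_one_add_mul_mul_exp_mul_log (hΛ : Λ ≠ 0) :
    ∫ x in (0:ℝ)..1, (1 + Λ * x) * exp (Λ * x) * log x = (1 - exp Λ) / Λ := by
  have hint : IntervalIntegrable (fun x => (1 + Λ * x) * exp (Λ * x) * log x)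
      MeasureTheory.volume 0 1 :=
    intervalIntegrable_log'.continuousOn_mul (by fun_prop)
  rw [integral_eq_sub_of_hasDerivAt_of_le zero_le_one continuous_antideriv.continuousOn
    (fun x hx => hasDerivAt_antideriv hΛ hx.1.ne') hint, antideriv_zero, antideriv_one]
  ring

end ExpLogIntegral

/-- For every `Λ > 0`,
`-e^(-Λ) ∫_0^1 (1 + Λx) e^(Λx) log x dx = (1 - e^(-Λ))/Λ`. -/
theorem stmt_10 (Λ : ℝ) (hΛ : 0 < Λ) :
    -Real.exp (-Λ) * ∫ x in (0:ℝ)..1, (1 + Λ * x) * Real.exp (Λ * x) * Real.log x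
      = (1 - Real.exp (-Λ)) / Λ := by
  rw [ExpLogIntegral.integral_one_add_mul_mul_exp_mul_log hΛ.ne', exp_neg]
  field_simp
  ring
end

section
/- Define I(γ,Λ) = ∫_0^1 (1 + Λx) e^(-Λ(1-x)) (1 - x^(1/γ)) dx for γ, Λ > 0. Then lim_{γ → ∞} (γ+1) I(γ,Λ) = (1 - e^(-Λ))/Λ. -/
/-!
For `x ∈ (0, 1]` the factor `(γ + 1)(1 - x^(1/γ))` tends to `-log x` as `γ → ∞`, and by
`1 + t ≤ eᵗ` it is bounded by `2 (-log x)` once `γ ≥ 1`; since `log` is integrable on `(0, 1]`,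
dominated convergence against any bounded weight turns the limit into `-∫₀¹ w(x) log x dx`. For
the weight `(1 + Λx) e^(-Λ(1-x))` this integral is explicit: an antiderivative of
`(1 + Λx) e^(-Λ(1-x)) log x` is `-e^(-Λ(1-x)) (1/Λ - x log x)`.
-/

open Real Filter MeasureTheory Set Topology

namespace Real

lemma one_sub_rpow_le_neg_mul_log {x : ℝ} (hx : 0 < x) (t : ℝ) : 1 - x ^ t ≤ -(t * log x) := by
  have := add_one_le_exp (log x * t)
  rw [← rpow_def_of_pos hx] at this
  linarith

lemma abs_mul_one_sub_rpow_inv_le {x γ : ℝ} (hx₀ : 0 < x) (hx₁ : x ≤ 1) (hγ : 1 ≤ γ) :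
    |(γ + 1) * (1 - x ^ γ⁻¹)| ≤ 2 * -log x := by
  have hγ₀ : 0 < γ := by linarith
  have hlog : 0 ≤ -log x := neg_nonneg.mpr (log_nonpos hx₀.le hx₁)
  have hrpow : x ^ γ⁻¹ ≤ 1 := rpow_le_one hx₀.le hx₁ (by positivity)
  rw [abs_of_nonneg (by nlinarith)]
  calc (γ + 1) * (1 - x ^ γ⁻¹) ≤ (γ + 1) * -(γ⁻¹ * log x) := by
        gcongr; exact one_sub_rpow_le_neg_mul_log hx₀ _
    _ = (1 + γ⁻¹) * -log x := by field_simp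
    _ ≤ 2 * -log x := by
        gcongr; linarith [inv_le_one_of_one_le₀ hγ]

lemma tendsto_mul_one_sub_rpow_inv {x : ℝ} (hx : 0 < x) :
    Tendsto (fun γ : ℝ => (γ + 1) * (1 - x ^ γ⁻¹)) atTop (𝓝 (-log x)) := by
  have hslope := (hasStrictDerivAt_const_rpow hx 0).hasDerivAt.tendsto_slope_zero
  have hinv : Tendsto (fun γ : ℝ => γ⁻¹) atTop (𝓝[≠] 0) :=
    tendsto_inv_atTop_nhdsGT_zero.mono_right (nhdsGT_le_nhdsNE 0)
  have hlim := (((tendsto_const_nhds (x := (1 : ℝ))).add tendsto_inv_atTop_zero).mul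
    (hslope.comp hinv).neg)
  rw [add_zero, one_mul, rpow_zero, one_mul] at hlim
  refine hlim.congr' ?_
  filter_upwards [eventually_gt_atTop 0] with γ hγ
  simp only [Function.comp_apply, zero_add, smul_eq_mul, inv_inv]
  field_simp
  ring

end Real

theorem tendsto_mul_intervalIntegral_one_sub_rpow_inv {f : ℝ → ℝ} {C : ℝ}
    (hf : AEStronglyMeasurable f (volume.restrict (Ioc 0 1)))
    (hfC : ∀ᵐ x ∂volume.restrict (Ioc 0 1), ‖f x‖ ≤ C) :
    Tendsto (fun γ : ℝ => (γ + 1) * ∫ x in (0 : ℝ)..1, f x * (1 - x ^ γ⁻¹)) atTop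
      (𝓝 (-∫ x in (0 : ℝ)..1, f x * log x)) := by
  simp only [intervalIntegral.integral_of_le zero_le_one, ← integral_const_mul, ← integral_neg]
  refine tendsto_integral_filter_of_dominated_convergence (fun x => C * (2 * -log x))
    (.of_forall fun γ => ?_) ?_ ?_ ?_
  · exact aestronglyMeasurable_const.mul (hf.mul (by fun_prop))
  · filter_upwards [eventually_ge_atTop 1] with γ hγ
    filter_upwards [hfC, ae_restrict_mem measurableSet_Ioc] with x hfx hx
    rw [mul_left_comm, norm_mul]
    exact mul_le_mul hfx (Real.abs_mul_one_sub_rpow_inv_le hx.1 hx.2 hγ) (norm_nonneg _)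
      ((norm_nonneg _).trans hfx)
  · exact (intervalIntegral.intervalIntegrable_log'.1.neg.const_mul 2).const_mul C
  · filter_upwards [ae_restrict_mem measurableSet_Ioc] with x hx
    simpa only [mul_left_comm, mul_neg] using
      (Real.tendsto_mul_one_sub_rpow_inv hx.1).const_mul (f x)

lemma integral_one_add_mul_mul_exp_mul_log {Λ : ℝ} (hΛ : Λ ≠ 0) :
    ∫ x in (0 : ℝ)..1, (1 + Λ * x) * exp (-Λ * (1 - x)) * log x = (exp (-Λ) - 1) / Λ := by
  set G : ℝ → ℝ := fun x => -(exp (-Λ * (1 - x)) * (Λ⁻¹ - x * log x))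
  have hG : ∀ x ∈ Ioo (0 : ℝ) 1,
      HasDerivAt G ((1 + Λ * x) * exp (-Λ * (1 - x)) * log x) x := by
    intro x hx
    have hexp : HasDerivAt (fun x => exp (-Λ * (1 - x))) (exp (-Λ * (1 - x)) * Λ) x := by
      simpa using (((hasDerivAt_id x).const_sub 1).const_mul (-Λ)).exp
    refine (hexp.mul ((hasDerivAt_mul_log hx.1.ne').const_sub Λ⁻¹)).neg.congr_deriv ?_
    field_simp
    ring
  rw [intervalIntegral.integral_eq_sub_of_hasDerivAt_of_le zero_le_one
    (by fun_prop) hG ((intervalIntegral.intervalIntegrable_log').continuousOn_mul (by fun_prop))]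
  simp only [G, neg_mul, sub_self, mul_zero, neg_zero, exp_zero, log_one, sub_zero, one_mul,
    mul_one, log_zero, sub_neg_eq_add]
  field_simp
  ring

/-- With `I(γ,Λ) = ∫_0^1 (1+Λx) e^(-Λ(1-x)) (1 - x^(1/γ)) dx`, one has
`lim_{γ → ∞} (γ+1) I(γ,Λ) = (1 - e^(-Λ))/Λ`. -/
theorem stmt_11 (Λ : ℝ) (hΛ : 0 < Λ) :
    Tendsto
      (fun γ : ℝ => (γ + 1) *
        ∫ x in (0:ℝ)..1, (1 + Λ * x) * Real.exp (-Λ * (1 - x)) * (1 - x ^ (1 / γ)))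
      atTop (nhds ((1 - Real.exp (-Λ)) / Λ)) := by
  have hw : Continuous fun x : ℝ => (1 + Λ * x) * exp (-Λ * (1 - x)) := by fun_prop
  obtain ⟨C, hC⟩ := (isCompact_Icc (a := (0 : ℝ)) (b := 1)).exists_bound_of_continuousOn
    hw.continuousOn
  have hlim := tendsto_mul_intervalIntegral_one_sub_rpow_inv hw.aestronglyMeasurable
    (ae_restrict_of_forall_mem measurableSet_Ioc fun x hx => hC x (Ioc_subset_Icc_self hx))
  rw [integral_one_add_mul_mul_exp_mul_log hΛ.ne', ← neg_div, neg_sub] at hlim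
  simpa only [one_div] using hlim
end

section
/- Let Λ > 0, ψ ∈ (0,1], and K a positive integer. Define the probability mass function q*(m) ∝ q_M(m+K) · (m+K)!/m! · ψ^m on nonnegative integers m ≥ 0, where q_M is the 1-shifted Poisson(Λ) pmf. Then q* equals the mixture (Λψ/(Λψ+K)) · Pois₁(Λψ) + (K/(Λψ+K)) · Pois(Λψ), where Pois(λ) is the Poisson pmf with parameter λ and Pois₁(λ)(m) = e^(-λ) λ^(m-1)/(m-1)! for m ≥ 1 (and 0 for m = 0). -/
/-!
With `x = Λψ`, the unnormalised weight `q_M(m+K)(m+K)!/m! ψ^m` equals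
`e^{-Λ}Λ^{K-1} (m+K) x^m/m!`, and these sum to `e^{-Λ}Λ^{K-1} (x+K) e^x`. Splitting `m + K` into
`m` and `K`, the identity `m x^m/m! = x · x^{m-1}/(m-1)!` turns the first part into the shifted
Poisson pmf with weight `x/(x+K)`, the second into the Poisson pmf with weight `K/(x+K)`.
-/

open Real Nat

lemma mul_pow_div_factorial_eq {𝕜 : Type*} [Field 𝕜] [CharZero 𝕜] (x : 𝕜) (n : ℕ) :
    x * (x ^ n / n !) = (n + 1) * (x ^ (n + 1) / (n + 1)!) := by
  rw [factorial_succ, pow_succ]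
  push_cast
  field_simp

lemma hasSum_natCast_add_mul_pow_div_factorial (x : ℝ) (K : ℕ) :
    HasSum (fun n : ℕ ↦ ((n : ℝ) + K) * (x ^ n / n !)) ((x + K) * exp x) := by
  have hexp : HasSum (fun n : ℕ ↦ x ^ n / n !) (exp x) := by
    simpa only [← exp_eq_exp_ℝ] using NormedSpace.expSeries_div_hasSum_exp (𝔸 := ℝ) x
  have hshift : HasSum (fun n : ℕ ↦ ((n + 1 : ℕ) : ℝ) * (x ^ (n + 1) / (n + 1)!)) (x * exp x) := by
    push_cast
    simpa only [mul_pow_div_factorial_eq] using hexp.mul_left x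
  have hmul : HasSum (fun n : ℕ ↦ (n : ℝ) * (x ^ n / n !)) (x * exp x) := by
    simpa using (hasSum_nat_add_iff (f := fun n : ℕ ↦ (n : ℝ) * (x ^ n / n !)) 1).mp hshift
  convert hmul.add (hexp.mul_left (K : ℝ)) using 1
  · ext n; ring
  · ring

/-- With `q_M` the 1-shifted Poisson(Λ) pmf, `ψ ∈ (0,1]` and `K ≥ 1`, the pmf
`q*(m) ∝ q_M(m+K)(m+K)!/m! ψ^m` equals the mixture
`(Λψ/(Λψ+K)) Pois₁(Λψ) + (K/(Λψ+K)) Pois(Λψ)`. -/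
theorem stmt_14 (Λ : ℝ) (hΛ : 0 < Λ) (ψ : ℝ) (hψ : ψ ∈ Set.Ioc (0:ℝ) 1)
    (K : ℕ) (hK : 0 < K)
    (qM : ℕ → ℝ)
    (hqM : ∀ m : ℕ, 1 ≤ m →
      qM m = Real.exp (-Λ) * Λ ^ (m - 1) / (m - 1).factorial)
    (pois pois1 : ℕ → ℝ)
    (hpois : ∀ m : ℕ, pois m = Real.exp (-(Λ * ψ)) * (Λ * ψ) ^ m / m.factorial)
    (hpois1_zero : pois1 0 = 0)
    (hpois1 : ∀ m : ℕ, 1 ≤ m →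
      pois1 m = Real.exp (-(Λ * ψ)) * (Λ * ψ) ^ (m - 1) / (m - 1).factorial) :
    ∀ m : ℕ,
      (qM (m + K) * (((m + K).factorial : ℝ) / (m.factorial : ℝ)) * ψ ^ m) /
          (∑' n : ℕ, qM (n + K) * (((n + K).factorial : ℝ) / (n.factorial : ℝ)) * ψ ^ n)
        = (Λ * ψ / (Λ * ψ + K)) * pois1 m + ((K : ℝ) / (Λ * ψ + K)) * pois m := by
  intro m
  set x := Λ * ψ
  have hx : 0 < x := mul_pos hΛ hψ.1
  set C := exp (-Λ) * Λ ^ (K - 1)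
  have hC : 0 < C := by positivity
  have hterm : ∀ n : ℕ, qM (n + K) * (((n + K)! : ℝ) / n !) * ψ ^ n
      = C * (((n : ℝ) + K) * (x ^ n / n !)) := by
    intro n
    obtain ⟨j, hj⟩ : ∃ j, n + K = j + 1 := ⟨n + K - 1, by omega⟩
    have hK' : j = n + (K - 1) := by omega
    have hcast : ((j + 1 : ℕ) : ℝ) = n + K := by exact_mod_cast hj.symm
    rw [hqM _ (by omega), hj, factorial_succ, add_tsub_cancel_right, cast_mul, hcast, hK',
      pow_add, mul_pow]
    field_simp
    ring
  have hmix : ∀ k : ℕ, x * pois1 k + K * pois k = exp (-x) * (((k : ℝ) + K) * (x ^ k / k !)) := by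
    rintro (_ | n)
    · simp [hpois1_zero, hpois, mul_comm]
    · rw [hpois1 _ (by omega), hpois, add_tsub_cancel_right, mul_div_assoc, mul_div_assoc,
        mul_left_comm, mul_pow_div_factorial_eq]
      push_cast
      ring
  rw [tsum_congr hterm, ((hasSum_natCast_add_mul_pow_div_factorial x K).mul_left C).tsum_eq,
    hterm, div_mul_eq_mul_div, div_mul_eq_mul_div, ← add_div, hmix, exp_neg]
  field_simp
end
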